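/- For every c > 0 and every L̄ > 0 there exists a constant C such that for all ℓ ∈ (0, L̄] the function κ_c(ℓ) := −cos(Y_c(ℓ)) is differentiable and satisfies | (d/dℓ)κ_c(ℓ) | ≤ C·ℓ. -/

import Mathlib

open Real

/-- `Y_c(ℓ) = 2 arctan(e^c · tan((1/2) arctan(sinh(ℓ/2))))`; geometrically
`π/2 − Y_c(ℓ) = (ℓ/(2π)) Z_c(ℓ)` where `{Z_c(ℓ)}×S¹` is the circle in the standard collar
around a geodesic of length `ℓ` at hyperbolic distance `c` from the collar boundary. -/
noncomputable def Yc (c ℓ : ℝ) : ℝ :=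
  2 * Real.arctan (Real.exp c * Real.tan ((1 / 2) * Real.arctan (Real.sinh (ℓ / 2))))

/-!
`Y_c(0) = 0` and `Y_c` is `e^c`-Lipschitz, so `|sin Y_c(ℓ)| ≤ |Y_c(ℓ)| ≤ e^c ℓ`; since
`κ_c' = sin(Y_c) · Y_c'`, this gives `|κ_c'(ℓ)| ≤ e^{2c} ℓ`. The Lipschitz bound comes from the
chain rule: `arctan ∘ sinh` (the Gudermannian) has derivative `sech ≤ 1`, and halving it keeps its
values in `(-π/4, π/4)`, where `tan' = 1 / cos² ≤ 2`.
-/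

theorem abs_le_mul_abs_of_abs_deriv_le {f : ℝ → ℝ} {K : ℝ} (hf : Differentiable ℝ f)
    (hK : ∀ x, |deriv f x| ≤ K) (h0 : f 0 = 0) (x : ℝ) : |f x| ≤ K * |x| := by
  simpa [h0] using convex_univ.norm_image_sub_le_of_norm_deriv_le (fun y _ => hf y)
    (fun y _ => hK y) (Set.mem_univ 0) (Set.mem_univ x)

theorem hasDerivAt_arctan_sinh (x : ℝ) :
    HasDerivAt (fun y => arctan (sinh y)) (cosh x)⁻¹ x := by
  convert (hasDerivAt_sinh x).arctan using 1
  rw [← cosh_sq']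
  field_simp [(cosh_pos x).ne']

theorem half_lt_cos_half_arctan_sq (y : ℝ) : 1 / 2 < cos ((1 / 2) * arctan y) ^ 2 := by
  rw [cos_sq, show 2 * ((1 / 2) * arctan y) = arctan y by ring]
  linarith [cos_arctan_pos y]

theorem exists_hasDerivAt_tan_half_arctan_sinh (ℓ : ℝ) :
    ∃ u', HasDerivAt (fun l => tan ((1 / 2) * arctan (sinh (l / 2)))) u' ℓ ∧ |u'| ≤ 1 / 2 := by
  have hcos := half_lt_cos_half_arctan_sq (sinh (ℓ / 2))
  set θ := (1 / 2) * arctan (sinh (ℓ / 2))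
  have hθ : HasDerivAt (fun l => (1 / 2) * arctan (sinh (l / 2)))
      ((1 / 2) * ((cosh (ℓ / 2))⁻¹ * (1 / 2))) ℓ :=
    ((hasDerivAt_arctan_sinh (ℓ / 2)).comp ℓ ((hasDerivAt_id ℓ).div_const 2)).const_mul _
  have hcos0 : cos θ ≠ 0 := fun h => by norm_num [h] at hcos
  have hu := (hasDerivAt_tan hcos0).comp ℓ hθ
  refine ⟨_, hu, ?_⟩
  have hsech : (cosh (ℓ / 2))⁻¹ ≤ 1 := inv_le_one_of_one_le₀ (one_le_cosh _)
  have hsec : 1 / cos θ ^ 2 ≤ 2 := by rw [div_le_iff₀ (by positivity)]; linarith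
  rw [abs_of_nonneg (by positivity)]
  calc 1 / cos θ ^ 2 * ((1 / 2) * ((cosh (ℓ / 2))⁻¹ * (1 / 2)))
      ≤ 2 * ((1 / 2) * (1 * (1 / 2))) := by gcongr
    _ = 1 / 2 := by norm_num

theorem exists_hasDerivAt_Yc (c ℓ : ℝ) : ∃ y', HasDerivAt (Yc c) y' ℓ ∧ |y'| ≤ exp c := by
  obtain ⟨u', hu, hu'⟩ := exists_hasDerivAt_tan_half_arctan_sinh ℓ
  set v := exp c * tan ((1 / 2) * arctan (sinh (ℓ / 2)))
  refine ⟨_, ((hu.const_mul (exp c)).arctan.const_mul 2 :), ?_⟩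
  have hv : 1 / (1 + v ^ 2) ≤ 1 :=
    div_le_one_of_le₀ (le_add_of_nonneg_right (sq_nonneg v)) (by positivity)
  calc |2 * (1 / (1 + v ^ 2) * (exp c * u'))| = 2 * (1 / (1 + v ^ 2)) * exp c * |u'| := by
        rw [abs_mul, abs_mul, abs_mul, abs_of_pos (exp_pos c), abs_two,
          abs_of_pos (by positivity : (0 : ℝ) < 1 / (1 + v ^ 2))]
        ring
    _ ≤ 2 * 1 * exp c * (1 / 2) := by gcongr
    _ = exp c := by ring

theorem differentiable_Yc (c : ℝ) : Differentiable ℝ (Yc c) := fun ℓ =>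
  (exists_hasDerivAt_Yc c ℓ).choose_spec.1.differentiableAt

theorem abs_Yc_le (c ℓ : ℝ) : |Yc c ℓ| ≤ exp c * |ℓ| := by
  refine abs_le_mul_abs_of_abs_deriv_le (differentiable_Yc c) (fun x => ?_) (by simp [Yc]) ℓ
  obtain ⟨y', hy, hy'⟩ := exists_hasDerivAt_Yc c x
  rwa [hy.deriv]

theorem curvature_derivative_bound_general (c : ℝ) (Lbar : ℝ) :
    ∃ C : ℝ, ∀ ℓ : ℝ, ℓ ∈ Set.Ioc 0 Lbar →
      DifferentiableAt ℝ (fun l => -Real.cos (Yc c l)) ℓ ∧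
      |deriv (fun l => -Real.cos (Yc c l)) ℓ| ≤ C * ℓ := by
  refine ⟨exp c ^ 2, fun ℓ hℓ => ?_⟩
  obtain ⟨y', hY, hy'⟩ := exists_hasDerivAt_Yc c ℓ
  have hκ : HasDerivAt (fun l => -cos (Yc c l)) (sin (Yc c ℓ) * y') ℓ := by
    have := hY.cos.neg
    rwa [neg_mul, neg_neg] at this
  refine ⟨hκ.differentiableAt, ?_⟩
  have hsin : |sin (Yc c ℓ)| ≤ exp c * ℓ := by
    simpa [abs_of_pos hℓ.1] using abs_sin_le_abs.trans (abs_Yc_le c ℓ)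
  calc |deriv (fun l => -cos (Yc c l)) ℓ| = |sin (Yc c ℓ)| * |y'| := by rw [hκ.deriv, abs_mul]
    _ ≤ exp c * ℓ * exp c := mul_le_mul hsin hy' (abs_nonneg _) (by positivity [hℓ.1])
    _ = exp c ^ 2 * ℓ := by ring

/-- The geodesic curvature `κ_c(ℓ) = −cos(Y_c(ℓ))` of the circle at distance `c` from the
collar boundary is differentiable in `ℓ` with `|κ_c′(ℓ)| ≤ C ℓ` for `ℓ ∈ (0, L̄]`. -/
theorem curvature_derivative_bound (c : ℝ) (hc : 0 < c) (Lbar : ℝ) (hL : 0 < Lbar) :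
    ∃ C : ℝ, ∀ ℓ : ℝ, ℓ ∈ Set.Ioc 0 Lbar →
      DifferentiableAt ℝ (fun l => -Real.cos (Yc c l)) ℓ ∧
      |deriv (fun l => -Real.cos (Yc c l)) ℓ| ≤ C * ℓ :=
  curvature_derivative_bound_general c Lbar
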